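/- arXiv:2211.15956 — 4 statements merged into one kernel-verified Lean document; each statement's English description precedes it below -/
import Mathlib

section
/- Let Σ_β be a real symmetric positive definite d×d matrix, let μ_β ∈ ℝ^d, let g ∈ ℝ^d with g ≠ 0, and let τ > 1. Define μ_sg = μ_β + (√(2 log τ) / ‖g‖_{Σ_β}) · (Σ_β g), and let f(x) = det(2πΣ_β)^{−1/2} · exp(−½ (x − μ_β)ᵀ Σ_β⁻¹ (x − μ_β)) be the Gaussian density with mean μ_β and covariance Σ_β. Then f(μ_sg) = f(μ_β) / τ. (KKT density-ratio property of the closed-form solution, equation (11).) -/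
open Matrix

/-- **KKT density-ratio property (equation (11)).**
For the Gaussian density `f` with mean `mub` and covariance `Sb` (symmetric
positive definite), `g ≠ 0`, `τ > 1`, the closed-form solution
`musg = mub + (√(2 log τ) / ‖g‖_{Sb}) • (Sb g)` satisfies
`f musg = f mub / τ`. -/
theorem sg_closed_form_density_ratio {d : ℕ} (hd : 1 ≤ d)
    (Sb : Matrix (Fin d) (Fin d) ℝ) (hSb : Sb.PosDef)
    (mub g : Fin d → ℝ) (hg : g ≠ 0) (τ : ℝ) (hτ : 1 < τ)
    (musg : Fin d → ℝ)
    (hmusg : musg = mub +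
      (Real.sqrt (2 * Real.log τ) / Real.sqrt (g ⬝ᵥ Sb *ᵥ g)) • (Sb *ᵥ g))
    (f : (Fin d → ℝ) → ℝ)
    (hf : ∀ x, f x = (((2 * Real.pi) • Sb).det) ^ (-(1 / 2) : ℝ) *
      Real.exp (-(1 / 2 : ℝ) * ((x - mub) ⬝ᵥ Sb⁻¹ *ᵥ (x - mub)))) :
    f musg = f mub / τ := by
  have hq : 0 < g ⬝ᵥ Sb *ᵥ g := by simpa using hSb.dotProduct_mulVec_pos hg
  have hlog : 0 < Real.log τ := Real.log_pos hτ
  have hkey : (Sb *ᵥ g) ⬝ᵥ Sb⁻¹ *ᵥ (Sb *ᵥ g) = g ⬝ᵥ Sb *ᵥ g := by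
    have hSbT : Sbᵀ = Sb := hSb.1
    rw [mulVec_mulVec, Matrix.nonsing_inv_mul Sb hSb.det_pos.ne'.isUnit, one_mulVec,
      dotProduct_mulVec]
    congr 1
    rw [← mulVec_transpose, hSbT]
  set c : ℝ := Real.sqrt (2 * Real.log τ) / Real.sqrt (g ⬝ᵥ Sb *ᵥ g) with hc
  have hdiff : musg - mub = c • (Sb *ᵥ g) := by rw [hmusg]; abel
  have hquad : (musg - mub) ⬝ᵥ Sb⁻¹ *ᵥ (musg - mub) = 2 * Real.log τ := by
    rw [hdiff, smul_dotProduct, mulVec_smul, dotProduct_smul, hkey, smul_eq_mul,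
      smul_eq_mul, ← mul_assoc, ← sq, hc, div_pow, Real.sq_sqrt (by positivity), Real.sq_sqrt hq.le,
      div_mul_cancel₀ _ hq.ne']
  rw [hf, hf, hquad]
  have hself : (mub - mub) ⬝ᵥ Sb⁻¹ *ᵥ (mub - mub) = 0 := by simp
  rw [hself, mul_zero, Real.exp_zero, mul_one]
  have : Real.exp (-(1 / 2 : ℝ) * (2 * Real.log τ)) = 1 / τ := by
    rw [show -(1 / 2 : ℝ) * (2 * Real.log τ) = -Real.log τ by ring, Real.exp_neg,
      Real.exp_log (by linarith), one_div]
  rw [this]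
  ring
end

section
/- Let N ≥ 1, let g ∈ ℝ^d with g ≠ 0, and for each i ∈ {1, …, N} let μ_i ∈ ℝ^d, let Σ_i be a real symmetric positive definite d×d matrix, and let r_i > 0. Define E_i = {μ ∈ ℝ^d : ½ (μ − μ_i)ᵀ Σ_i⁻¹ (μ − μ_i) ≤ r_i} and μ̄_i = μ_i + (√(2 r_i) / ‖g‖_{Σ_i}) · (Σ_i g). If μ ∈ ⋃_{i=1}^N E_i satisfies gᵀ μ = max_{1 ≤ i ≤ N} gᵀ μ̄_i, then μ = μ̄_j for some j ∈ {1, …, N}; i.e., every maximizer of the linear objective over the union of ellipsoids is one of the per-component closed-form solutions. (Claim in the proof of Proposition 3.2 that no maximizer lies outside the set of subproblem maximizers.) -/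
open Matrix

/-- **Maximizer characterization in the proof of Proposition 3.2.**
Every maximizer of the linear objective `gᵀ μ` over the union of the
ellipsoids `E i` is one of the per-component closed-form solutions `mubar i`. -/
theorem union_ellipsoids_maximizer_is_subproblem_solution
    {d : ℕ} (hd : 1 ≤ d) (N : ℕ) (hN : 1 ≤ N)
    (g : Fin d → ℝ) (hg : g ≠ 0)
    (mu : Fin N → Fin d → ℝ)
    (Sig : Fin N → Matrix (Fin d) (Fin d) ℝ) (hSig : ∀ i, (Sig i).PosDef)
    (r : Fin N → ℝ) (hr : ∀ i, 0 < r i)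
    (E : Fin N → Set (Fin d → ℝ))
    (hE : ∀ i, E i = {μ : Fin d → ℝ |
      (1 / 2 : ℝ) * ((μ - mu i) ⬝ᵥ (Sig i)⁻¹ *ᵥ (μ - mu i)) ≤ r i})
    (mubar : Fin N → Fin d → ℝ)
    (hmubar : ∀ i, mubar i = mu i +
      (Real.sqrt (2 * r i) / Real.sqrt (g ⬝ᵥ (Sig i) *ᵥ g)) • ((Sig i) *ᵥ g))
    (μ : Fin d → ℝ) (hμ : μ ∈ ⋃ i, E i)
    (hopt : g ⬝ᵥ μ = Finset.univ.sup' (Finset.univ_nonempty_iff.mpr ⟨⟨0, hN⟩⟩)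
      (fun i => g ⬝ᵥ mubar i)) :
    ∃ j, μ = mubar j := by
  obtain ⟨_, ⟨i, rfl⟩, hi⟩ := hμ
  simp only [hE i, Set.mem_setOf_eq] at hi
  set A := Sig i with hA
  set B := A⁻¹ with hBdef
  have hApd : A.PosDef := hSig i
  have hBpd : B.PosDef := hApd.inv
  have hv : (0 : ℝ) < g ⬝ᵥ A *ᵥ g := by
    have := hApd.dotProduct_mulVec_pos hg
    simpa using this
  set v : Fin d → ℝ := μ - mu i with hvdef
  set c : ℝ := Real.sqrt (2 * r i) / Real.sqrt (g ⬝ᵥ A *ᵥ g) with hcdef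
  set w : Fin d → ℝ := c • (A *ᵥ g) with hwdef
  have hc : 0 < c :=
    div_pos (Real.sqrt_pos.2 (by linarith [hr i])) (Real.sqrt_pos.2 hv)
  have hc2 : c * c * (g ⬝ᵥ A *ᵥ g) = 2 * r i := by
    rw [hcdef, div_mul_div_comm, Real.mul_self_sqrt (by linarith [hr i]),
      Real.mul_self_sqrt hv.le]
    field_simp
  have hBA : B * A = 1 := Matrix.nonsing_inv_mul A hApd.det_pos.ne'.isUnit
  have hBw : B *ᵥ w = c • g := by
    rw [hwdef, Matrix.mulVec_smul, Matrix.mulVec_mulVec, hBA, Matrix.one_mulVec]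
  have hgw : g ⬝ᵥ w = c * (g ⬝ᵥ A *ᵥ g) := by
    rw [hwdef, dotProduct_smul, smul_eq_mul]
  -- optimality: g⬝v ≥ g⬝w
  have hmub : mubar i = mu i + w := hmubar i
  have hge : g ⬝ᵥ w ≤ g ⬝ᵥ v := by
    have h1 : g ⬝ᵥ mubar i ≤ g ⬝ᵥ μ := by
      rw [hopt]
      exact Finset.le_sup' (fun j => g ⬝ᵥ mubar j) (Finset.mem_univ i)
    have h2 : g ⬝ᵥ mubar i = g ⬝ᵥ mu i + g ⬝ᵥ w := by
      rw [hmub, dotProduct_add]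
    have h3 : g ⬝ᵥ v = g ⬝ᵥ μ - g ⬝ᵥ mu i := by
      rw [hvdef, dotProduct_sub]
    linarith
  -- cross terms
  have hvBw : v ⬝ᵥ B *ᵥ w = c * (g ⬝ᵥ v) := by
    rw [hBw, dotProduct_smul, smul_eq_mul, dotProduct_comm]
  have hBsym : Bᵀ = B := by
    have := hBpd.isHermitian
    simpa [Matrix.IsHermitian, Matrix.conjTranspose_eq_transpose_of_trivial] using this
  have hwBv : w ⬝ᵥ B *ᵥ v = c * (g ⬝ᵥ v) := by
    rw [Matrix.dotProduct_mulVec, ← Matrix.mulVec_transpose, hBsym, hBw,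
      smul_dotProduct, smul_eq_mul]
  have hwBw : w ⬝ᵥ B *ᵥ w = 2 * r i := by
    rw [hBw, dotProduct_smul, smul_eq_mul, hwdef, smul_dotProduct,
      smul_eq_mul]
    rw [dotProduct_comm]
    rw [← mul_assoc]
    exact hc2
  have hvBv : v ⬝ᵥ B *ᵥ v ≤ 2 * r i := by linarith [hi]
  -- expansion
  have hexp : (v - w) ⬝ᵥ B *ᵥ (v - w)
      = v ⬝ᵥ B *ᵥ v - v ⬝ᵥ B *ᵥ w - w ⬝ᵥ B *ᵥ v + w ⬝ᵥ B *ᵥ w := by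
    rw [Matrix.mulVec_sub, sub_dotProduct, dotProduct_sub,
      dotProduct_sub]
    ring
  have hle : (v - w) ⬝ᵥ B *ᵥ (v - w) ≤ 0 := by
    rw [hexp, hvBw, hwBv, hwBw]
    have : c * (g ⬝ᵥ w) ≤ c * (g ⬝ᵥ v) := mul_le_mul_of_nonneg_left hge hc.le
    rw [hgw, ← mul_assoc] at this
    linarith [hc2]
  have hvw : v = w := by
    by_contra hne
    have h0 : v - w ≠ 0 := sub_ne_zero.2 hne
    have := hBpd.dotProduct_mulVec_pos h0
    simp only [star_trivial] at this
    linarith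
  refine ⟨i, ?_⟩
  rw [hmub, ← hvw, hvdef]
  abel
end

section
/- Let N ≥ 1, let λ_1, …, λ_N be strictly positive reals with ∑_{i=1}^N λ_i = 1, let μ_1, …, μ_N ∈ ℝ^d, and let Σ_1, …, Σ_N be real symmetric positive definite d×d matrices. Let τ > 1 and set δ = min_{1 ≤ i ≤ N} (½ log det(2πΣ_i) − log λ_i) + log τ. Fix j ∈ {1, …, N} such that r_j := δ + log λ_j − ½ log det(2πΣ_j) ≥ 0, fix g ∈ ℝ^d with g ≠ 0, and define μ̄_j = μ_j + (√(2 r_j) / ‖g‖_{Σ_j}) · (Σ_j g). Then λ_j · f_{μ_j,Σ_j}(μ̄_j) = (1/τ) · max_{1 ≤ i ≤ N} λ_i · f_{μ_i,Σ_i}(μ_i). (KKT property of the Proposition 3.2 solution: the scaled Gaussian density at the subproblem solution equals 1/τ times the largest scaled component density at its mean.) -/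
open Matrix

private lemma sup'_neg_eq_neg_inf' {N : ℕ} (H : (Finset.univ : Finset (Fin N)).Nonempty)
    (k : Fin N → ℝ) :
    Finset.univ.sup' H (fun i => -k i) = -(Finset.univ.inf' H k) := by
  apply le_antisymm
  · apply Finset.sup'_le
    intro i hi
    exact neg_le_neg (Finset.inf'_le _ hi)
  · obtain ⟨i0, hi0, hmin⟩ := Finset.exists_mem_eq_inf' H k
    rw [hmin]
    exact Finset.le_sup' (fun i => -k i) hi0

/-- **KKT property of the Proposition 3.2 solution.**
With `δ = min_i (½ log det(2π Σᵢ) - log λᵢ) + log τ`, a component `j` whose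
radius `r_j = δ + log λ_j - ½ log det(2π Σ_j)` is nonnegative, and
`mubarj = μ_j + (√(2 r_j) / ‖g‖_{Σ_j}) • (Σ_j g)`, the scaled Gaussian density
satisfies `λ_j · f_j(mubarj) = (1/τ) · max_i λ_i · f_i(μ_i)`. -/
theorem mg_lse_kkt_density_ratio {d : ℕ} (hd : 1 ≤ d) (N : ℕ) (hN : 1 ≤ N)
    (lam : Fin N → ℝ) (hlam : ∀ i, 0 < lam i) (hsum : ∑ i, lam i = 1)
    (mu : Fin N → Fin d → ℝ)
    (Sig : Fin N → Matrix (Fin d) (Fin d) ℝ) (hSig : ∀ i, (Sig i).PosDef)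
    (τ : ℝ) (hτ : 1 < τ)
    (δ : ℝ)
    (hδ : δ = Finset.univ.inf' (Finset.univ_nonempty_iff.mpr ⟨⟨0, hN⟩⟩)
        (fun i => (1 / 2 : ℝ) * Real.log (((2 * Real.pi) • Sig i).det)
          - Real.log (lam i)) + Real.log τ)
    (j : Fin N) (rj : ℝ)
    (hrj : rj = δ + Real.log (lam j)
      - (1 / 2 : ℝ) * Real.log (((2 * Real.pi) • Sig j).det))
    (hrjnn : 0 ≤ rj)
    (g : Fin d → ℝ) (hg : g ≠ 0)
    (mubarj : Fin d → ℝ)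
    (hmubarj : mubarj = mu j +
      (Real.sqrt (2 * rj) / Real.sqrt (g ⬝ᵥ (Sig j) *ᵥ g)) • ((Sig j) *ᵥ g))
    (f : Fin N → (Fin d → ℝ) → ℝ)
    (hf : ∀ i x, f i x = (((2 * Real.pi) • Sig i).det) ^ (-(1 / 2) : ℝ) *
      Real.exp (-(1 / 2 : ℝ) * ((x - mu i) ⬝ᵥ (Sig i)⁻¹ *ᵥ (x - mu i)))) :
    lam j * f j mubarj = (1 / τ) *
      Finset.univ.sup' (Finset.univ_nonempty_iff.mpr ⟨⟨0, hN⟩⟩)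
        (fun i => lam i * f i (mu i)) := by
  have H : (Finset.univ : Finset (Fin N)).Nonempty :=
    Finset.univ_nonempty_iff.mpr ⟨⟨0, hN⟩⟩
  set D : Fin N → ℝ := fun i => ((2 * Real.pi) • Sig i).det with hD
  -- positivity of determinants
  have hDpos : ∀ i, 0 < D i := by
    intro i
    have hdet : 0 < (Sig i).det := (hSig i).det_pos
    have : D i = (2 * Real.pi) ^ d * (Sig i).det := by
      simp [hD, Matrix.det_smul]
    rw [this]
    have hpi : (0:ℝ) < 2 * Real.pi := by positivity
    positivity
  -- the scaled densities at the means
  have hmean : ∀ i, lam i * f i (mu i) =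
      Real.exp (Real.log (lam i) - (1 / 2 : ℝ) * Real.log (D i)) := by
    intro i
    rw [hf]
    simp only [sub_self, zero_dotProduct, mul_zero, Real.exp_zero, mul_one]
    rw [Real.rpow_def_of_pos (hDpos i),
      show Real.log (D i) * (-(1 / 2) : ℝ)
        = (Real.log (lam i) - (1 / 2 : ℝ) * Real.log (D i)) - Real.log (lam i) by ring,
      Real.exp_sub, Real.exp_log (hlam i)]
    field_simp
    exact div_self (hlam i).ne'

  -- rewrite sup as exp of sup
  have hsup : Finset.univ.sup' H (fun i => lam i * f i (mu i)) =
      Real.exp (-(Finset.univ.inf' H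
        (fun i => (1 / 2 : ℝ) * Real.log (D i) - Real.log (lam i)))) := by
    have hcomp : Real.exp (Finset.univ.sup' H
        (fun i => -((1 / 2 : ℝ) * Real.log (D i) - Real.log (lam i)))) =
        Finset.univ.sup' H (fun i => Real.exp
          (-((1 / 2 : ℝ) * Real.log (D i) - Real.log (lam i)))) :=
      Finset.comp_sup'_eq_sup'_comp H Real.exp (fun x y => Real.exp_monotone.map_max)
    rw [← sup'_neg_eq_neg_inf' H, hcomp]
    apply Finset.sup'_congr H rfl
    intro i _
    rw [hmean i, neg_sub]
  -- the quadratic form at mubarj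
  have hq : 0 < g ⬝ᵥ (Sig j) *ᵥ g := by
    have := (hSig j).dotProduct_mulVec_pos hg
    simpa using this
  set q : ℝ := g ⬝ᵥ (Sig j) *ᵥ g with hqdef
  set c : ℝ := Real.sqrt (2 * rj) / Real.sqrt q with hc
  have hSigInv : (Sig j)⁻¹ *ᵥ ((Sig j) *ᵥ g) = g := by
    rw [Matrix.mulVec_mulVec, Matrix.nonsing_inv_mul _ (hSig j).det_pos.ne'.isUnit,
      Matrix.one_mulVec]
  have hquad : (mubarj - mu j) ⬝ᵥ (Sig j)⁻¹ *ᵥ (mubarj - mu j) = 2 * rj := by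
    have hx : mubarj - mu j = c • ((Sig j) *ᵥ g) := by
      rw [hmubarj]; abel
    rw [hx, Matrix.mulVec_smul, hSigInv, smul_dotProduct, dotProduct_smul,
      smul_eq_mul, smul_eq_mul, dotProduct_comm]
    have h2rj : 0 ≤ 2 * rj := by linarith
    have hsq : Real.sqrt q ≠ 0 := by positivity
    rw [show Real.sqrt (2 * rj) / Real.sqrt q * (Real.sqrt (2 * rj) / Real.sqrt q * q)
      = (Real.sqrt (2 * rj) * Real.sqrt (2 * rj)) * (q / (Real.sqrt q * Real.sqrt q)) by ring,
      Real.mul_self_sqrt h2rj, Real.mul_self_sqrt hq.le, div_self hq.ne', mul_one]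
  -- now compute lhs
  rw [hsup, hf, hquad, Real.rpow_def_of_pos (hDpos j)]
  rw [← Real.exp_log (hlam j), ← Real.exp_add, ← Real.exp_add]
  set m : ℝ := Finset.univ.inf' H
      (fun i => (1 / 2 : ℝ) * Real.log (D i) - Real.log (lam i)) with hm
  have hτpos : 0 < τ := lt_trans one_pos hτ
  have : (1 / τ) * Real.exp (-m) = Real.exp (-m - Real.log τ) := by
    rw [Real.exp_sub, Real.exp_log hτpos]
    ring
  rw [this]
  congr 1
  rw [hrj, hδ]
  simp only [hD]
  ring
end

section
/- Let N ≥ 1, let λ_1, …, λ_N be strictly positive reals with ∑_{i=1}^N λ_i = 1, let μ_1, …, μ_N ∈ ℝ^d, let Σ_1, …, Σ_N be real symmetric positive definite d×d matrices, and let g ∈ ℝ^d with g ≠ 0. Write Σ̄ = (∑_{i=1}^N λ_i Σ_i⁻¹)⁻¹ and μ̄ = Σ̄ (∑_{i=1}^N λ_i Σ_i⁻¹ μ_i). Let τ > 1 be such that κ² := 2 log τ − ∑_{i=1}^N λ_i μ_iᵀ Σ_i⁻¹ μ_i + μ̄ᵀ Σ̄⁻¹ μ̄ ≥ 0, set κ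 = √(κ²), and define μ_jensen = μ̄ + (κ / ‖g‖_{Σ̄}) · (Σ̄ g). Then: (i) ∑_{i=1}^N λ_i · ½ (μ_jensen − μ_i)ᵀ Σ_i⁻¹ (μ_jensen − μ_i) = log τ, so μ_jensen is feasible; and (ii) for every μ ∈ ℝ^d with ∑_{i=1}^N λ_i · ½ (μ − μ_i)ᵀ Σ_i⁻¹ (μ − μ_i) ≤ log τ, it holds that gᵀ μ ≤ gᵀ μ_jensen. (Proposition 3.3: closed-form solution of the Jensen-relaxed behavior-constrained problem.) -/
open Matrix

lemma sum_mulVec' {n : ℕ} {ι : Type*} (s : Finset ι) (M : ι → Matrix (Fin n) (Fin n) ℝ)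
    (v : Fin n → ℝ) : (∑ i ∈ s, M i) *ᵥ v = ∑ i ∈ s, M i *ᵥ v := by
  ext j
  simp only [Matrix.mulVec, dotProduct, Matrix.sum_apply, Finset.sum_apply,
    Finset.sum_mul]
  exact Finset.sum_comm

lemma dotProduct_finsum' {n : ℕ} {ι : Type*} (s : Finset ι) (x : Fin n → ℝ)
    (f : ι → Fin n → ℝ) : x ⬝ᵥ (∑ i ∈ s, f i) = ∑ i ∈ s, x ⬝ᵥ f i := by
  simp only [dotProduct, Finset.sum_apply, Finset.mul_sum]
  exact Finset.sum_comm

lemma dot_symm' {n : ℕ} {S : Matrix (Fin n) (Fin n) ℝ} (h : S.IsHermitian)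
    (x y : Fin n → ℝ) : x ⬝ᵥ S *ᵥ y = y ⬝ᵥ S *ᵥ x := by
  have ht : Sᵀ = S := by
    rw [← Matrix.conjTranspose_eq_transpose_of_trivial]; exact h.eq
  rw [dotProduct_mulVec, ← mulVec_transpose, dotProduct_comm, ht]

lemma cs_posdef' {n : ℕ} {S : Matrix (Fin n) (Fin n) ℝ} (hS : S.PosDef) (u v : Fin n → ℝ) :
    (u ⬝ᵥ S *ᵥ v) * (u ⬝ᵥ S *ᵥ v) ≤ (u ⬝ᵥ S *ᵥ u) * (v ⬝ᵥ S *ᵥ v) := by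
  have h := @real_inner_mul_inner_self_le (Fin n → ℝ)
    (S.toSeminormedAddCommGroup hS.posSemidef)
    (S.toInnerProductSpace hS.posSemidef) u v
  simpa [inner, dotProduct_comm (S *ᵥ _)] using h

lemma expand_quad' {n : ℕ} {A : Matrix (Fin n) (Fin n) ℝ} (hA : A.IsHermitian)
    (x y : Fin n → ℝ) :
    (x - y) ⬝ᵥ A *ᵥ (x - y)
      = x ⬝ᵥ A *ᵥ x - 2 * (x ⬝ᵥ A *ᵥ y) + y ⬝ᵥ A *ᵥ y := by
  rw [mulVec_sub, sub_dotProduct, dotProduct_sub, dotProduct_sub, dot_symm' hA y x]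
  ring

/-- **Proposition 3.3: closed-form solution of the Jensen-relaxed
behavior-constrained problem.**
With `Σ̄ = (∑ i, λᵢ Σᵢ⁻¹)⁻¹`, `μ̄ = Σ̄ (∑ i, λᵢ Σᵢ⁻¹ μᵢ)`,
`κ² = 2 log τ - ∑ i, λᵢ μᵢᵀ Σᵢ⁻¹ μᵢ + μ̄ᵀ Σ̄⁻¹ μ̄ ≥ 0`, `κ = √(κ²)`, and
`μ_jensen = μ̄ + (κ / ‖g‖_{Σ̄}) • (Σ̄ g)`:
(i) `∑ i, λᵢ · ½ (μ_jensen - μᵢ)ᵀ Σᵢ⁻¹ (μ_jensen - μᵢ) = log τ`, and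
(ii) every feasible `μ` satisfies `gᵀ μ ≤ gᵀ μ_jensen`. -/
theorem mg_jensen_closed_form {d : ℕ} (hd : 1 ≤ d) (N : ℕ) (hN : 1 ≤ N)
    (lam : Fin N → ℝ) (hlam : ∀ i, 0 < lam i) (hsum : ∑ i, lam i = 1)
    (mu : Fin N → Fin d → ℝ)
    (Sig : Fin N → Matrix (Fin d) (Fin d) ℝ) (hSig : ∀ i, (Sig i).PosDef)
    (g : Fin d → ℝ) (hg : g ≠ 0)
    (Sbar : Matrix (Fin d) (Fin d) ℝ) (hSbar : Sbar = (∑ i, lam i • (Sig i)⁻¹)⁻¹)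
    (mubar : Fin d → ℝ)
    (hmubar : mubar = Sbar *ᵥ (∑ i, lam i • ((Sig i)⁻¹ *ᵥ mu i)))
    (τ : ℝ) (hτ : 1 < τ)
    (κsq : ℝ)
    (hκsq : κsq = 2 * Real.log τ - ∑ i, lam i * (mu i ⬝ᵥ (Sig i)⁻¹ *ᵥ mu i)
      + mubar ⬝ᵥ Sbar⁻¹ *ᵥ mubar)
    (hκsqnn : 0 ≤ κsq)
    (κ : ℝ) (hκ : κ = Real.sqrt κsq)
    (mujensen : Fin d → ℝ)
    (hmujensen : mujensen = mubar +
      (κ / Real.sqrt (g ⬝ᵥ Sbar *ᵥ g)) • (Sbar *ᵥ g)) :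
    (∑ i, lam i * ((1 / 2 : ℝ) *
        ((mujensen - mu i) ⬝ᵥ (Sig i)⁻¹ *ᵥ (mujensen - mu i))) = Real.log τ) ∧
    (∀ μ : Fin d → ℝ,
      ∑ i, lam i * ((1 / 2 : ℝ) * ((μ - mu i) ⬝ᵥ (Sig i)⁻¹ *ᵥ (μ - mu i)))
          ≤ Real.log τ →
        g ⬝ᵥ μ ≤ g ⬝ᵥ mujensen) := by
  set A : Fin N → Matrix (Fin d) (Fin d) ℝ := fun i => (Sig i)⁻¹ with hA
  have hApd : ∀ i, (A i).PosDef := fun i => (hSig i).inv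
  set S : Matrix (Fin d) (Fin d) ℝ := ∑ i, lam i • A i with hS
  have hSmulvec : ∀ v : Fin d → ℝ, S *ᵥ v = ∑ i, lam i • (A i *ᵥ v) := by
    intro v
    rw [hS, sum_mulVec']
    exact Finset.sum_congr rfl fun i _ => smul_mulVec _ _ _
  -- S is positive definite
  have hSherm : S.IsHermitian := by
    rw [hS, Matrix.IsHermitian, Matrix.conjTranspose_sum]
    refine Finset.sum_congr rfl fun i _ => ?_
    rw [Matrix.conjTranspose_smul]
    rw [(hApd i).isHermitian.eq]
    simp
  have hSpd : S.PosDef := by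
    refine Matrix.PosDef.of_dotProduct_mulVec_pos hSherm fun x hx => ?_
    rw [hSmulvec x]
    have hstar : (star x : Fin d → ℝ) = x := by simp
    rw [hstar, dotProduct_finsum']
    refine Finset.sum_pos (fun i _ => ?_) ⟨⟨0, hN⟩, Finset.mem_univ _⟩
    rw [dotProduct_smul, smul_eq_mul]
    have h2 := (hApd i).dotProduct_mulVec_pos hx
    rw [show (star x : Fin d → ℝ) = x from by simp] at h2
    exact mul_pos (hlam i) h2
  have hSdet : IsUnit S.det := hSpd.det_pos.ne'.isUnit
  have hSbarpd : Sbar.PosDef := by rw [hSbar]; exact hSpd.inv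
  have hSbarinv : Sbar⁻¹ = S := by
    rw [hSbar]; exact Matrix.nonsing_inv_nonsing_inv _ hSdet
  have hSSbar : S * Sbar = 1 := by rw [hSbar]; exact Matrix.mul_nonsing_inv _ hSdet
  set b : Fin d → ℝ := ∑ i, lam i • (A i *ᵥ mu i) with hb
  have hSmubar : S *ᵥ mubar = b := by
    rw [hmubar, Matrix.mulVec_mulVec, hSSbar, Matrix.one_mulVec]
  -- quadratic form identities
  have hQ : ∀ x y : Fin d → ℝ, x ⬝ᵥ S *ᵥ y = ∑ i, lam i * (x ⬝ᵥ A i *ᵥ y) := by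
    intro x y
    rw [hSmulvec y, dotProduct_finsum']
    exact Finset.sum_congr rfl fun i _ => by rw [dotProduct_smul, smul_eq_mul]
  have hbdot : ∀ x : Fin d → ℝ, x ⬝ᵥ b = ∑ i, lam i * (x ⬝ᵥ A i *ᵥ mu i) := by
    intro x
    rw [hb, dotProduct_finsum']
    exact Finset.sum_congr rfl fun i _ => by rw [dotProduct_smul, smul_eq_mul]
  set C : ℝ := ∑ i, lam i * (mu i ⬝ᵥ A i *ᵥ mu i) with hC
  have key : ∀ μ : Fin d → ℝ,
      ∑ i, lam i * ((1 / 2 : ℝ) * ((μ - mu i) ⬝ᵥ A i *ᵥ (μ - mu i)))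
        = (1 / 2) * (μ ⬝ᵥ S *ᵥ μ) - μ ⬝ᵥ b + (1 / 2) * C := by
    intro μ
    have h1 : ∀ i, lam i * ((1 / 2 : ℝ) * ((μ - mu i) ⬝ᵥ A i *ᵥ (μ - mu i)))
        = (1 / 2) * (lam i * (μ ⬝ᵥ A i *ᵥ μ)) - lam i * (μ ⬝ᵥ A i *ᵥ mu i)
          + (1 / 2) * (lam i * (mu i ⬝ᵥ A i *ᵥ mu i)) := by
      intro i
      rw [expand_quad' (hApd i).isHermitian]
      ring
    rw [Finset.sum_congr rfl fun i _ => h1 i]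
    rw [Finset.sum_add_distrib, Finset.sum_sub_distrib, ← Finset.mul_sum, ← Finset.mul_sum,
      ← hQ, ← hbdot, hC]
  -- rewrite κsq
  have hκsq' : κsq = 2 * Real.log τ - C + mubar ⬝ᵥ b := by
    rw [hκsq, hSbarinv, hC, hSmubar]
  have key2 : ∀ μ : Fin d → ℝ,
      ∑ i, lam i * ((1 / 2 : ℝ) * ((μ - mu i) ⬝ᵥ A i *ᵥ (μ - mu i)))
        = (1 / 2) * ((μ - mubar) ⬝ᵥ S *ᵥ (μ - mubar)) + Real.log τ - κsq / 2 := by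
    intro μ
    rw [key μ, expand_quad' hSherm, hSmubar, hκsq']
    ring
  set q : ℝ := g ⬝ᵥ Sbar *ᵥ g with hq
  have hqpos : 0 < q := by
    have h2 := hSbarpd.dotProduct_mulVec_pos hg
    rw [show (star g : Fin d → ℝ) = g from by simp] at h2
    exact h2
  have hsqrtq : Real.sqrt q * Real.sqrt q = q := Real.mul_self_sqrt hqpos.le
  have hsqrtqpos : 0 < Real.sqrt q := Real.sqrt_pos.2 hqpos
  have hκnn : 0 ≤ κ := hκ ▸ Real.sqrt_nonneg κsq
  set t : ℝ := κ / Real.sqrt q with ht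
  have hdiff : mujensen - mubar = t • (Sbar *ᵥ g) := by
    rw [hmujensen]; abel
  have hSw : S *ᵥ (Sbar *ᵥ g) = g := by
    rw [Matrix.mulVec_mulVec, hSSbar, Matrix.one_mulVec]
  have hwSw : (Sbar *ᵥ g) ⬝ᵥ S *ᵥ (Sbar *ᵥ g) = q := by
    rw [hSw, dotProduct_comm, hq]
  have hκ2 : κ * κ = κsq := by rw [hκ]; exact Real.mul_self_sqrt hκsqnn
  have hquad_j : (mujensen - mubar) ⬝ᵥ S *ᵥ (mujensen - mubar) = κsq := by
    rw [hdiff, smul_dotProduct, mulVec_smul, dotProduct_smul, hwSw, smul_eq_mul, smul_eq_mul,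
      ht]
    have hcalc : κ / Real.sqrt q * (κ / Real.sqrt q * q)
        = κ * κ * (q / (Real.sqrt q * Real.sqrt q)) := by ring
    rw [hcalc, hsqrtq, div_self hqpos.ne', mul_one, hκ2]
  constructor
  · rw [key2 mujensen, hquad_j]; ring
  · intro μ hfeas
    rw [key2 μ] at hfeas
    have hQd : (μ - mubar) ⬝ᵥ S *ᵥ (μ - mubar) ≤ κsq := by linarith
    -- Cauchy–Schwarz step
    have hcs := cs_posdef' hSpd (Sbar *ᵥ g) (μ - mubar)
    rw [hwSw] at hcs
    have hgdiff : (Sbar *ᵥ g) ⬝ᵥ S *ᵥ (μ - mubar) = g ⬝ᵥ (μ - mubar) := by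
      rw [dot_symm' hSherm, hSw, dotProduct_comm]
    have h1 : ((Sbar *ᵥ g) ⬝ᵥ S *ᵥ (μ - mubar)) * ((Sbar *ᵥ g) ⬝ᵥ S *ᵥ (μ - mubar))
        ≤ q * κsq := by
      refine hcs.trans ?_
      exact mul_le_mul_of_nonneg_left hQd hqpos.le
    have h3 : (Real.sqrt q * κ) * (Real.sqrt q * κ) = q * κsq := by
      have h4 : (Real.sqrt q * κ) * (Real.sqrt q * κ)
          = (Real.sqrt q * Real.sqrt q) * (κ * κ) := by ring
      rw [h4, hsqrtq, hκ2]
    have hbound : (Sbar *ᵥ g) ⬝ᵥ S *ᵥ (μ - mubar) ≤ Real.sqrt q * κ := by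
      nlinarith [h1, h3, mul_nonneg hsqrtqpos.le hκnn]
    have hgj : g ⬝ᵥ mujensen = g ⬝ᵥ mubar + Real.sqrt q * κ := by
      rw [hmujensen, dotProduct_add, dotProduct_smul, smul_eq_mul, ← hq, ht,
        div_mul_eq_mul_div, mul_div_assoc, Real.div_sqrt]
      ring
    have hfin : g ⬝ᵥ μ - g ⬝ᵥ mubar ≤ Real.sqrt q * κ := by
      rw [← dotProduct_sub, ← hgdiff]; exact hbound
    rw [hgj]
    linarith
end
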